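/- arXiv:1704.04674 — 2 statements merged into one kernel-verified Lean document; each statement's English description precedes it below -/
import Mathlib

section
/- Let r ≥ 1 be an integer and let G be a finite simple graph such that every edge (u,v) of G satisfies max(d_u, d_v) ≥ r. Then ∑_{v ∈ V(G)} d_v^r ≤ 3·r^r·∑_{v ∈ V(G)} C(d_v, r), where C(d, r) denotes the binomial coefficient 'd choose r'. -/
open Finset

lemma key_pow_le (r d : ℕ) (hd : r ≤ d) : d ^ r ≤ r ^ r * d.choose r := by
  have h1 : Nat.factorial r * d ^ r ≤ r ^ r * d.descFactorial r := by
    have l1 : Nat.factorial r * d ^ r = ∏ i ∈ range r, ((r - i) * d) := by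
      rw [prod_mul_distrib, prod_const, card_range, ← Nat.descFactorial_eq_prod_range,
        Nat.descFactorial_self]
    have l2 : r ^ r * ∏ i ∈ range r, (d - i) = ∏ i ∈ range r, (r * (d - i)) := by
      rw [prod_mul_distrib, prod_const, card_range]
    rw [l1, Nat.descFactorial_eq_prod_range, l2]
    apply prod_le_prod'
    intro i hi
    simp only [mem_range] at hi
    have : i * r ≤ i * d := Nat.mul_le_mul (le_refl i) hd
    have h2 : i * d ≤ r * d := Nat.mul_le_mul (le_of_lt hi) (le_refl d)
    have h3 : i ≤ d := le_trans (le_of_lt hi) hd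
    calc (r - i) * d = r * d - i * d := by rw [Nat.sub_mul]
      _ ≤ r * d - i * r := by omega
      _ = r * (d - i) := by rw [Nat.mul_sub, Nat.mul_comm i r]
  rw [Nat.descFactorial_eq_factorial_mul_choose, ← mul_assoc, mul_comm (r^r) (Nat.factorial r), mul_assoc] at h1
  exact Nat.le_of_mul_le_mul_left h1 (Nat.factorial_pos r)

theorem stmt_1 {V : Type} [Fintype V] [DecidableEq V]
    (G : SimpleGraph V) [DecidableRel G.Adj] (r : ℕ) (hr : 1 ≤ r)
    (h : ∀ u v, G.Adj u v → r ≤ max (G.degree u) (G.degree v)) :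
    ∑ v, (G.degree v) ^ r ≤ 3 * r ^ r * ∑ v, (G.degree v).choose r := by
  classical
  set L := univ.filter (fun v => G.degree v < r) with hL
  set H := univ.filter (fun v => r ≤ G.degree v) with hH
  have hHbound : ∑ v ∈ H, (G.degree v) ^ r ≤ r ^ r * ∑ v ∈ H, (G.degree v).choose r := by
    rw [mul_sum]
    apply sum_le_sum
    intro v hv
    simp only [hH, mem_filter] at hv
    exact key_pow_le r _ hv.2
  -- low part
  have hLH : ∀ v ∈ L, ∀ u, G.Adj v u → u ∈ H := by
    intro v hv u hadj
    simp only [hL, mem_filter] at hv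
    have := h v u hadj
    simp only [hH, mem_filter, mem_univ, true_and]
    omega
  have hcount : ∑ v ∈ L, G.degree v ≤ ∑ u ∈ H, G.degree u := by
    have e1 : ∀ v ∈ L, G.degree v = (H.filter (fun u => G.Adj v u)).card := by
      intro v hv
      rw [← SimpleGraph.card_neighborFinset_eq_degree]
      congr 1
      ext u
      simp only [mem_filter, SimpleGraph.mem_neighborFinset]
      exact ⟨fun ha => ⟨hLH v hv u ha, ha⟩, fun ⟨_, ha⟩ => ha⟩
    calc ∑ v ∈ L, G.degree v = ∑ v ∈ L, ∑ u ∈ H, (if G.Adj v u then 1 else 0) := by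
            apply sum_congr rfl
            intro v hv
            rw [e1 v hv, card_filter]
      _ = ∑ u ∈ H, ∑ v ∈ L, (if G.Adj u v then 1 else 0) := by
            rw [sum_comm]
            apply sum_congr rfl; intro u _; apply sum_congr rfl; intro v _
            simp [SimpleGraph.adj_comm]
      _ ≤ ∑ u ∈ H, G.degree u := by
            apply sum_le_sum
            intro u _
            rw [← SimpleGraph.card_neighborFinset_eq_degree]
            calc ∑ v ∈ L, (if G.Adj u v then 1 else 0)
                = (L.filter (fun v => G.Adj u v)).card := by
                  rw [card_filter]
              _ ≤ (G.neighborFinset u).card := by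
                  apply card_le_card
                  intro v hv
                  simp only [mem_filter] at hv
                  simp [SimpleGraph.mem_neighborFinset, hv.2]
  have hLbound : ∑ v ∈ L, (G.degree v) ^ r ≤ r ^ r * ∑ v ∈ H, (G.degree v).choose r := by
    calc ∑ v ∈ L, (G.degree v) ^ r ≤ ∑ v ∈ L, r ^ (r - 1) * G.degree v := by
          apply sum_le_sum
          intro v hv
          simp only [hL, mem_filter] at hv
          calc (G.degree v) ^ r = (G.degree v) ^ (r - 1) * G.degree v := by
                  rw [← pow_succ]; congr 1; omega
            _ ≤ r ^ (r - 1) * G.degree v :=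
                  Nat.mul_le_mul_right _ (Nat.pow_le_pow_left (le_of_lt hv.2) _)
      _ = r ^ (r - 1) * ∑ v ∈ L, G.degree v := by rw [mul_sum]
      _ ≤ r ^ (r - 1) * ∑ u ∈ H, G.degree u := Nat.mul_le_mul_left _ hcount
      _ = ∑ u ∈ H, r ^ (r - 1) * G.degree u := by rw [mul_sum]
      _ ≤ ∑ u ∈ H, (G.degree u) ^ r := by
          apply sum_le_sum
          intro u hu
          simp only [hH, mem_filter] at hu
          calc r ^ (r - 1) * G.degree u ≤ (G.degree u) ^ (r - 1) * G.degree u :=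
                Nat.mul_le_mul_right _ (Nat.pow_le_pow_left hu.2 _)
            _ = (G.degree u) ^ r := by rw [← pow_succ]; congr 1; omega
      _ ≤ r ^ r * ∑ v ∈ H, (G.degree v).choose r := hHbound
  have hnot : univ.filter (fun v => ¬ r ≤ G.degree v) = L := by
    ext v; simp [hL, Nat.not_le]
  have hsum : ∑ v, (G.degree v) ^ r = ∑ v ∈ H, (G.degree v) ^ r + ∑ v ∈ L, (G.degree v) ^ r := by
    rw [← sum_filter_add_sum_filter_not univ (fun v => r ≤ G.degree v), hnot]
  have hsub : ∑ v ∈ H, (G.degree v).choose r ≤ ∑ v, (G.degree v).choose r :=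
    sum_le_sum_of_subset (filter_subset _ _)
  calc ∑ v, (G.degree v) ^ r ≤ r ^ r * ∑ v ∈ H, (G.degree v).choose r
        + r ^ r * ∑ v ∈ H, (G.degree v).choose r := by
        rw [hsum]; exact Nat.add_le_add hHbound hLbound
    _ = 2 * (r ^ r * ∑ v ∈ H, (G.degree v).choose r) := by ring
    _ ≤ 3 * (r ^ r * ∑ v, (G.degree v).choose r) := by
        apply Nat.mul_le_mul (by norm_num)
        exact Nat.mul_le_mul_left _ hsub
    _ = 3 * r ^ r * ∑ v, (G.degree v).choose r := by ring
end

section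
/- Let (a_s)_{s≥1} be a sequence of non-negative reals with ∑_{s=1}^∞ a_s^r < ∞, and let k be an integer with 1 ≤ k < r. Then ∑_{s=1}^n a_s^k = o(n^{1 - k/r}) as n → ∞, i.e., (∑_{s=1}^n a_s^k)/n^{1-k/r} → 0. -/
/-!
Split the sum at a large index `N`. The finitely many terms below `N` contribute a constant,
which is `o(n^(1 - k/r))`. On the remaining terms Hölder's inequality with exponent `r/k`
gives `∑_{N ≤ s < n} a_s^k ≤ n^(1 - k/r) (∑_{s ≥ N} a_s^r)^(k/r)`, and the tail of the
convergent series `∑ a_s^r` is as small as we like.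
-/

open Filter Finset Real Topology

lemma Finset.sum_le_card_rpow_mul_sum_rpow {ι : Type*} (s : Finset ι) {p : ℝ} (hp : 1 ≤ p)
    {f : ι → ℝ} (hf : ∀ i, 0 ≤ f i) :
    ∑ i ∈ s, f i ≤ (#s : ℝ) ^ (1 - p⁻¹) * (∑ i ∈ s, f i ^ p) ^ p⁻¹ := by
  simpa using inner_le_weight_mul_Lp_of_nonneg s hp (fun _ ↦ 1) f (fun _ ↦ zero_le_one) hf

section

variable {a : ℕ → ℝ} (ha : ∀ s, 0 ≤ a s) {k r : ℕ} (hk : 0 < k) (hkr : k ≤ r)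
include ha hk hkr

lemma sum_pow_le_card_rpow_mul_sum_pow_rpow (s : Finset ℕ) :
    ∑ i ∈ s, a i ^ k ≤ (#s : ℝ) ^ (1 - (k : ℝ) / r) * (∑ i ∈ s, a i ^ r) ^ ((k : ℝ) / r) := by
  have hk' : (0 : ℝ) < k := by exact_mod_cast hk
  have hp : (1 : ℝ) ≤ (r : ℝ) / k := by
    rw [le_div_iff₀ hk', one_mul]; exact_mod_cast hkr
  have hpow (i : ℕ) : (a i ^ k) ^ ((r : ℝ) / k) = a i ^ r := by
    rw [← rpow_natCast, ← rpow_mul (ha i), mul_div_cancel₀ _ hk'.ne', rpow_natCast]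
  simpa only [hpow, inv_div] using
    s.sum_le_card_rpow_mul_sum_rpow hp fun i ↦ pow_nonneg (ha i) k

variable (hsum : Summable fun s ↦ a s ^ r)
include hsum

lemma sum_Ico_pow_le_rpow_mul_tail {N n : ℕ} :
    ∑ i ∈ Ico N n, a i ^ k ≤ (n : ℝ) ^ (1 - (k : ℝ) / r) * (∑' i, a (i + N) ^ r) ^ ((k : ℝ) / r) := by
  have hr : (0 : ℝ) < r := by exact_mod_cast hk.trans_le hkr
  have hα : 0 ≤ 1 - (k : ℝ) / r := by
    rw [sub_nonneg, div_le_one hr]; exact_mod_cast hkr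
  have htail : ∑ i ∈ Ico N n, a i ^ r ≤ ∑' i, a (i + N) ^ r := by
    rw [sum_Ico_eq_sum_range]
    simp_rw [add_comm N]
    exact ((summable_nat_add_iff N).2 hsum).sum_le_tsum _ fun i _ ↦ pow_nonneg (ha _) r
  refine (sum_pow_le_card_rpow_mul_sum_pow_rpow ha hk hkr _).trans ?_
  have hsum_nonneg : 0 ≤ ∑ i ∈ Ico N n, a i ^ r := sum_nonneg fun i _ ↦ pow_nonneg (ha i) r
  gcongr
  simp

lemma sum_range_pow_div_rpow_le_add_tail {N n : ℕ} (hNn : N ≤ n) (hn : 0 < n) :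
    (∑ i ∈ range n, a i ^ k) / (n : ℝ) ^ (1 - (k : ℝ) / r) ≤
      (∑ i ∈ range N, a i ^ k) / (n : ℝ) ^ (1 - (k : ℝ) / r) +
        (∑' i, a (i + N) ^ r) ^ ((k : ℝ) / r) := by
  have hnα : 0 < (n : ℝ) ^ (1 - (k : ℝ) / r) := rpow_pos_of_pos (by exact_mod_cast hn) _
  rw [← sum_range_add_sum_Ico _ hNn, add_div]
  gcongr
  rw [div_le_iff₀' hnα]
  exact sum_Ico_pow_le_rpow_mul_tail ha hk hkr hsum

end

theorem stmt_2 (a : ℕ → ℝ) (ha : ∀ s, 0 ≤ a s) (r k : ℕ) (hk : 1 ≤ k) (hkr : k < r)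
    (hsum : Summable fun s => a s ^ r) :
    Filter.Tendsto
      (fun n : ℕ => (∑ s ∈ Finset.range n, a s ^ k) / (n : ℝ) ^ ((1 : ℝ) - (k : ℝ) / (r : ℝ)))
      Filter.atTop (nhds 0) := by
  set α : ℝ := 1 - (k : ℝ) / r
  have hk0 : 0 < k := hk
  have hr : (0 : ℝ) < r := by exact_mod_cast hk0.trans hkr
  have hkr_pos : 0 < (k : ℝ) / r := div_pos (by exact_mod_cast hk0) hr
  have hα : 0 < α := by
    rw [sub_pos, div_lt_one hr]; exact_mod_cast hkr
  set tail : ℕ → ℝ := fun N ↦ (∑' i, a (i + N) ^ r) ^ ((k : ℝ) / r)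
  have htail : Tendsto tail atTop (𝓝 0) := by
    simpa [tail, zero_rpow hkr_pos.ne'] using
      (tendsto_sum_nat_add fun i ↦ a i ^ r).rpow_const (.inr hkr_pos.le)
  refine tendsto_order.2 ⟨fun ε hε ↦ .of_forall fun n ↦ hε.trans_le ?_, fun ε hε ↦ ?_⟩
  · exact div_nonneg (sum_nonneg fun i _ ↦ pow_nonneg (ha i) k) (by positivity)
  obtain ⟨N, hN⟩ := (htail.eventually (gt_mem_nhds (half_pos hε))).exists
  have hhead : Tendsto (fun n : ℕ ↦ (∑ i ∈ range N, a i ^ k) / (n : ℝ) ^ α) atTop (𝓝 0) :=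
    tendsto_const_nhds.div_atTop ((tendsto_rpow_atTop hα).comp tendsto_natCast_atTop_atTop)
  filter_upwards [hhead.eventually (gt_mem_nhds (half_pos hε)), eventually_gt_atTop N]
    with n hhead_n hNn
  calc _ ≤ (∑ i ∈ range N, a i ^ k) / (n : ℝ) ^ α + tail N :=
        sum_range_pow_div_rpow_le_add_tail ha hk0 hkr.le hsum hNn.le (N.zero_le.trans_lt hNn)
    _ < ε := by linarith
end
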